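/- For every x > 0, the second derivative of the Box-Cox transformation Λ_θ(x) with respect to θ is nonnegative for x ≥ 1 and nonpositive for 0 < x ≤ 1 (for all θ ≠ 0). Hence θ ↦ Λ̇_θ(x) is monotone increasing in θ when x ≥ 1 and monotone decreasing in θ when 0 < x < 1. -/

import Mathlib

/-!
Write `L = log x` and `y = θ L`. Then `Λ̈_θ(x) = (φ(y) - 2) / θ³` with `φ(y) = ((y - 1)² + 1) eʸ`,
which is increasing (`φ' = y² eʸ`) with `φ(0) = 2`; for `x ≥ 1` the number `y` has the sign of `θ`,
so `Λ̈ ≥ 0`. Hence `Λ̇` increases on `θ < 0` and on `θ > 0`, and the two pieces are separated by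
`L² / 2`, because `Λ̇_θ(x) = L² / 2 + ψ(y) / θ²` with `ψ(y) = (y - 1) eʸ + 1 - y² / 2` increasing
(`ψ' = y (eʸ - 1)`) and `ψ(0) = 0`. The case `x ≤ 1` reduces to `x ≥ 1` through the symmetry
`Λ_θ(1/x) = -Λ_{-θ}(x)`.
-/

open Real Set

noncomputable def boxCox (x θ : ℝ) : ℝ := (x ^ θ - 1) / θ

noncomputable def boxCoxDot (x θ : ℝ) : ℝ := 1 / θ ^ 2 * ((θ * log x - 1) * x ^ θ + 1)

noncomputable def boxCoxDDot (x θ : ℝ) : ℝ := (((θ * log x - 1) ^ 2 + 1) * x ^ θ - 2) / θ ^ 3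

theorem MonotoneOn.compl_singleton {α β : Type*} [LinearOrder α] [Preorder β] {f : α → β}
    {a : α} {c : β} (h₁ : MonotoneOn f (Iio a)) (h₂ : MonotoneOn f (Ioi a))
    (hlt : ∀ s < a, f s ≤ c) (hgt : ∀ t, a < t → c ≤ f t) : MonotoneOn f {a}ᶜ := by
  intro s hs t ht hst
  rcases Ne.lt_or_gt hs with hsa | has <;> rcases Ne.lt_or_gt ht with hta | hat
  · exact h₁ hsa hta hst
  · exact (hlt s hsa).trans (hgt t hat)
  · exact absurd hst (hta.trans has).not_ge
  · exact h₂ has hat hst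

theorem Monotone.sub_apply_zero_mul_nonneg {g : ℝ → ℝ} (hg : Monotone g) (y : ℝ) :
    0 ≤ (g y - g 0) * y := by
  simpa using (monovary_id_iff.2 hg).sub_mul_sub_nonneg 0 y

theorem monotoneOn_of_hasDerivAt_nonneg_of_isOpen {D : Set ℝ} (hD : Convex ℝ D)
    (hDo : IsOpen D) {f f' : ℝ → ℝ} (hf : ∀ x ∈ D, HasDerivAt f (f' x) x)
    (hf' : ∀ x ∈ D, 0 ≤ f' x) : MonotoneOn f D :=
  monotoneOn_of_hasDerivWithinAt_nonneg hD
    (fun x hx ↦ (hf x hx).continuousAt.continuousWithinAt)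
    (by rw [hDo.interior_eq]; exact fun x hx ↦ (hf x hx).hasDerivWithinAt)
    (by rwa [hDo.interior_eq])

theorem monotone_sq_sub_one_add_one_mul_exp :
    Monotone fun y : ℝ ↦ ((y - 1) ^ 2 + 1) * exp y := by
  refine monotone_of_hasDerivAt_nonneg (f' := fun y ↦ y ^ 2 * exp y) (fun y ↦ ?_)
    fun y ↦ by positivity
  refine (((((hasDerivAt_id y).sub_const 1).pow 2).add_const 1).mul
    (hasDerivAt_exp y)).congr_deriv ?_
  simp only [id, Pi.pow_apply]
  ring

theorem monotone_sub_one_mul_exp_add_one_sub_sq_div_two :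
    Monotone fun y : ℝ ↦ (y - 1) * exp y + 1 - y ^ 2 / 2 := by
  refine monotone_of_hasDerivAt_nonneg (f' := fun y ↦ (exp y - exp 0) * y) (fun y ↦ ?_)
    exp_monotone.sub_apply_zero_mul_nonneg
  refine (((((hasDerivAt_id y).sub_const 1).mul (hasDerivAt_exp y)).add_const 1).sub
    ((hasDerivAt_pow 2 y).div_const 2)).congr_deriv ?_
  simp only [id, exp_zero]
  ring

section BoxCox

variable {x t : ℝ}

theorem hasDerivAt_boxCox (hx : 0 < x) (ht : t ≠ 0) :
    HasDerivAt (boxCox x) (boxCoxDot x t) t := by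
  refine (((hasStrictDerivAt_const_rpow hx t).hasDerivAt.sub_const 1).div
    (hasDerivAt_id t) ht).congr_deriv ?_
  simp only [boxCoxDot, id]
  field_simp
  ring

theorem hasDerivAt_boxCoxDot (hx : 0 < x) (ht : t ≠ 0) :
    HasDerivAt (boxCoxDot x) (boxCoxDDot x t) t := by
  have hnum : HasDerivAt (fun s ↦ (s * log x - 1) * x ^ s + 1)
      (log x * x ^ t + (t * log x - 1) * (x ^ t * log x)) t := by
    simpa using (((hasDerivAt_id t).mul_const (log x)).sub_const 1).mul
      (hasStrictDerivAt_const_rpow hx t).hasDerivAt |>.add_const 1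
  have hquot : boxCoxDot x = fun s ↦ ((s * log x - 1) * x ^ s + 1) / s ^ 2 := by
    ext s
    simp only [boxCoxDot, one_div_mul_eq_div]
  rw [hquot]
  refine (hnum.div (hasDerivAt_pow 2 t) (pow_ne_zero 2 ht)).congr_deriv ?_
  simp only [boxCoxDDot]
  field_simp
  ring

theorem iteratedDeriv_two_boxCox (hx : 0 < x) (ht : t ≠ 0) :
    iteratedDeriv 2 (boxCox x) t = boxCoxDDot x t := by
  have hderiv : deriv (boxCox x) =ᶠ[nhds t] boxCoxDot x := by
    filter_upwards [eventually_ne_nhds ht] with s hs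
    exact (hasDerivAt_boxCox hx hs).deriv
  rw [iteratedDeriv_succ, iteratedDeriv_one, hderiv.deriv_eq, (hasDerivAt_boxCoxDot hx ht).deriv]

theorem boxCoxDDot_nonneg (hx : 1 ≤ x) (ht : t ≠ 0) : 0 ≤ boxCoxDDot x t := by
  have hmono : Monotone fun s ↦ ((s * log x - 1) ^ 2 + 1) * exp (s * log x) :=
    monotone_sq_sub_one_add_one_mul_exp.comp (monotone_mul_right_of_nonneg (log_nonneg hx))
  have h : 0 ≤ (((t * log x - 1) ^ 2 + 1) * exp (t * log x) - 2) * t := by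
    simpa [one_add_one_eq_two] using hmono.sub_apply_zero_mul_nonneg t
  rw [boxCoxDDot, rpow_def_of_pos (by linarith), mul_comm (log x), ← mul_div_mul_right _ _ ht,
    ← pow_succ]
  exact div_nonneg h (by norm_num; positivity)

theorem boxCoxDDot_inv (hx : 0 < x) (t : ℝ) : boxCoxDDot x⁻¹ t = -boxCoxDDot x (-t) := by
  simp only [boxCoxDDot, log_inv, inv_rpow hx.le, rpow_neg hx.le]
  ring

theorem boxCoxDDot_nonpos (hx₀ : 0 < x) (hx : x ≤ 1) (ht : t ≠ 0) : boxCoxDDot x t ≤ 0 := by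
  have h := boxCoxDDot_nonneg ((one_le_inv₀ hx₀).2 hx) (neg_ne_zero.2 ht)
  rwa [boxCoxDDot_inv hx₀, neg_neg, neg_nonneg] at h

theorem boxCoxDot_eq_add (hx : 0 < x) (ht : t ≠ 0) :
    boxCoxDot x t = log x ^ 2 / 2 +
      ((t * log x - 1) * exp (t * log x) + 1 - (t * log x) ^ 2 / 2) / t ^ 2 := by
  rw [boxCoxDot, rpow_def_of_pos hx, mul_comm (log x)]
  field_simp
  ring

theorem boxCoxDot_monotoneOn (hx : 1 ≤ x) : MonotoneOn (boxCoxDot x) {0}ᶜ := by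
  have hx₀ : 0 < x := by linarith
  have hL : 0 ≤ log x := log_nonneg hx
  refine MonotoneOn.compl_singleton (c := log x ^ 2 / 2)
    (monotoneOn_of_hasDerivAt_nonneg_of_isOpen (convex_Iio 0) isOpen_Iio
      (fun s hs ↦ hasDerivAt_boxCoxDot hx₀ hs.ne) fun s hs ↦ boxCoxDDot_nonneg hx hs.ne)
    (monotoneOn_of_hasDerivAt_nonneg_of_isOpen (convex_Ioi 0) isOpen_Ioi
      (fun s hs ↦ hasDerivAt_boxCoxDot hx₀ hs.ne') fun s hs ↦ boxCoxDDot_nonneg hx hs.ne')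
    (fun s hs ↦ ?_) fun s hs ↦ ?_
  · have h := monotone_sub_one_mul_exp_add_one_sub_sq_div_two
      (mul_nonpos_of_nonpos_of_nonneg hs.le hL)
    norm_num at h
    rw [boxCoxDot_eq_add hx₀ hs.ne, add_le_iff_nonpos_right]
    exact div_nonpos_of_nonpos_of_nonneg (by linarith) (sq_nonneg s)
  · have h := monotone_sub_one_mul_exp_add_one_sub_sq_div_two (mul_nonneg hs.le hL)
    norm_num at h
    rw [boxCoxDot_eq_add hx₀ hs.ne', le_add_iff_nonneg_right]
    exact div_nonneg (by linarith) (sq_nonneg s)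

theorem boxCoxDot_inv (hx : 0 < x) (t : ℝ) : boxCoxDot x⁻¹ t = boxCoxDot x (-t) := by
  simp only [boxCoxDot, log_inv, inv_rpow hx.le, rpow_neg hx.le]
  ring

theorem boxCoxDot_antitoneOn (hx₀ : 0 < x) (hx : x ≤ 1) : AntitoneOn (boxCoxDot x) {0}ᶜ := by
  intro s hs t ht hst
  rw [← neg_neg s, ← neg_neg t, ← boxCoxDot_inv hx₀, ← boxCoxDot_inv hx₀]
  exact boxCoxDot_monotoneOn ((one_le_inv₀ hx₀).2 hx) (neg_ne_zero.2 ht) (neg_ne_zero.2 hs)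
    (neg_le_neg hst)

end BoxCox

/-- For every `x > 0`, the second derivative in `θ` of the Box-Cox transformation
`Λ_θ(x) = (x^θ−1)/θ` is nonnegative for `x ≥ 1` and nonpositive for `0 < x ≤ 1`
(for all `θ ≠ 0`); hence `θ ↦ Λ̇_θ(x) = (1/θ²)((θ log x − 1)x^θ + 1)` is monotone
nondecreasing in `θ` when `x ≥ 1` and monotone nonincreasing when `0 < x < 1`. -/
theorem boxCox_second_deriv_sign_and_dot_monotone (x : ℝ) (hx : 0 < x) :
    (∀ θ : ℝ, θ ≠ 0 → 1 ≤ x →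
      0 ≤ iteratedDeriv 2 (fun t : ℝ => (x ^ t - 1) / t) θ) ∧
    (∀ θ : ℝ, θ ≠ 0 → x ≤ 1 →
      iteratedDeriv 2 (fun t : ℝ => (x ^ t - 1) / t) θ ≤ 0) ∧
    (1 ≤ x → ∀ θ₁ θ₂ : ℝ, θ₁ ≠ 0 → θ₂ ≠ 0 → θ₁ < θ₂ →
      (1 / θ₁ ^ 2) * ((θ₁ * Real.log x - 1) * x ^ θ₁ + 1) ≤
        (1 / θ₂ ^ 2) * ((θ₂ * Real.log x - 1) * x ^ θ₂ + 1)) ∧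
    (x < 1 → ∀ θ₁ θ₂ : ℝ, θ₁ ≠ 0 → θ₂ ≠ 0 → θ₁ < θ₂ →
      (1 / θ₂ ^ 2) * ((θ₂ * Real.log x - 1) * x ^ θ₂ + 1) ≤
        (1 / θ₁ ^ 2) * ((θ₁ * Real.log x - 1) * x ^ θ₁ + 1)) :=
  ⟨fun _ hθ hx₁ ↦ (boxCoxDDot_nonneg hx₁ hθ).trans_eq (iteratedDeriv_two_boxCox hx hθ).symm,
    fun _ hθ hx₁ ↦ (iteratedDeriv_two_boxCox hx hθ).trans_le (boxCoxDDot_nonpos hx hx₁ hθ),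
    fun hx₁ _ _ hθ₁ hθ₂ hθ ↦ boxCoxDot_monotoneOn hx₁ hθ₁ hθ₂ hθ.le,
    fun hx₁ _ _ hθ₁ hθ₂ hθ ↦ boxCoxDot_antitoneOn hx hx₁.le hθ₁ hθ₂ hθ.le⟩
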